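/- Power-law asymptotics of the SPA degree-distribution constants: Let p ∈ (0,1], A1 > 0, A2 > 0 with pA1 < 1. Define c_0 = 1/(1+pA2) and, for i ≥ 1, c_i = c_{i−1}·p·(A1(i−1)+A2)/(1+p(A1·i+A2)). Then there exists a constant c > 0 (depending on p, A1, A2) such that c_i = (1+o(1))·c·i^{−(1+1/(pA1))} as i → ∞; equivalently, c_i·i^{1+1/(pA1)} → c as i → ∞. -/

import Mathlib

/-!
With `a = A2 / A1` and `b = 1 / (p A1)` the recursion reads `c_{i+1} = c_i (a + i) / (a + b + 1 + i)`,
so `c_i / c_0 = ∏_{j<i} (a + j) / (a + b + 1 + j)`. Dividing Euler's limit formula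
`Γ(s) = lim n^s n! / ∏_{j≤n} (s + j)` at `s = y` by the one at `s = x` shows that
`∏_{j<n} (x + j) / (y + j) ~ Γ(y) / Γ(x) · n^(x - y)`; take `x = a`, `y = a + b + 1`.
-/

open Filter Finset Real Topology

noncomputable section

/-- The constants `c_i` of the SPA degree distribution. -/
def spaC (p A1 A2 : ℝ) : ℕ → ℝ
  | 0 => 1 / (1 + p * A2)
  | i + 1 => spaC p A1 A2 i * p * (A1 * i + A2) / (1 + p * (A1 * (i + 1) + A2))

lemma GammaSeq_div_GammaSeq {x y : ℝ} (hx : 0 < x) (hy : 0 < y) {n : ℕ} (hn : n ≠ 0) :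
    GammaSeq y n / GammaSeq x n * ((y + n) / (x + n)) =
      (∏ j ∈ range n, (x + j) / (y + j)) * (n : ℝ) ^ (y - x) := by
  have hn' : (0 : ℝ) < n := by positivity
  have hpow : (n : ℝ) ^ y = (n : ℝ) ^ (y - x) * (n : ℝ) ^ x := by
    rw [← rpow_add hn', sub_add_cancel]
  rw [GammaSeq, GammaSeq, prod_range_succ, prod_range_succ, prod_div_distrib, hpow]
  field_simp

theorem tendsto_prod_add_div_add_mul_rpow {x y : ℝ} (hx : 0 < x) (hy : 0 < y) :
    Tendsto (fun n : ℕ => (∏ j ∈ range n, (x + j) / (y + j)) * (n : ℝ) ^ (y - x)) atTop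
      (𝓝 (Gamma y / Gamma x)) := by
  have hshift : Tendsto (fun n : ℕ => (y + n) / (x + n)) atTop (𝓝 1) := by
    simpa using tendsto_add_mul_div_add_mul_atTop_nhds y x 1 one_ne_zero
  have hlim := ((GammaSeq_tendsto_Gamma y).div (GammaSeq_tendsto_Gamma x)
    (Gamma_pos_of_pos hx).ne').mul hshift
  rw [mul_one] at hlim
  refine hlim.congr' ?_
  filter_upwards [eventually_ne_atTop 0] with n hn
  exact GammaSeq_div_GammaSeq hx hy hn

lemma spaC_succ {p A1 A2 : ℝ} (hp : 0 < p) (hA1 : 0 < A1) (hA2 : 0 ≤ A2) (i : ℕ) :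
    spaC p A1 A2 (i + 1) =
      spaC p A1 A2 i * ((A2 / A1 + i) / (A2 / A1 + 1 / (p * A1) + 1 + i)) := by
  rw [spaC.eq_2, mul_assoc, mul_div_assoc]
  congr 1
  field_simp
  ring

lemma spaC_eq_mul_prod {p A1 A2 : ℝ} (hp : 0 < p) (hA1 : 0 < A1) (hA2 : 0 ≤ A2) (i : ℕ) :
    spaC p A1 A2 i = spaC p A1 A2 0 *
      ∏ j ∈ range i, (A2 / A1 + j) / (A2 / A1 + 1 / (p * A1) + 1 + j) := by
  induction i with
  | zero => simp
  | succ i ih => rw [spaC_succ hp hA1 hA2, ih, prod_range_succ, mul_assoc]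

theorem spaC_power_law_general
    (p A1 A2 : ℝ) (hp0 : 0 < p) (hA1 : 0 < A1) (hA2 : 0 < A2) :
    ∃ c > (0 : ℝ),
      Tendsto (fun i : ℕ => spaC p A1 A2 i * (i : ℝ) ^ ((1 : ℝ) + 1 / (p * A1)))
        atTop (nhds c) := by
  set a := A2 / A1
  set b := 1 / (p * A1)
  have ha : 0 < a := by positivity
  have hab : 0 < a + b + 1 := by positivity
  have hc0 : 0 < spaC p A1 A2 0 := by simp only [spaC]; positivity
  refine ⟨spaC p A1 A2 0 * (Gamma (a + b + 1) / Gamma a),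
    mul_pos hc0 (div_pos (Gamma_pos_of_pos hab) (Gamma_pos_of_pos ha)), ?_⟩
  convert (tendsto_prod_add_div_add_mul_rpow ha hab).const_mul (spaC p A1 A2 0) using 2 with i
  rw [spaC_eq_mul_prod hp0 hA1 hA2.le, mul_assoc, show a + b + 1 - a = 1 + b by ring]

/-- power-law asymptotics of the SPA degree-distribution constants: there is
a constant `c > 0` with `c_i = (1+o(1)) c i^{-(1+1/(pA1))}`, i.e.
`c_i i^{1+1/(pA1)} → c`. -/
theorem spaC_power_law
    (p A1 A2 : ℝ) (hp0 : 0 < p) (hp1 : p ≤ 1) (hA1 : 0 < A1) (hA2 : 0 < A2)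
    (hpA1 : p * A1 < 1) :
    ∃ c > (0 : ℝ),
      Tendsto (fun i : ℕ => spaC p A1 A2 i * (i : ℝ) ^ ((1 : ℝ) + 1 / (p * A1)))
        atTop (nhds c) :=
  spaC_power_law_general p A1 A2 hp0 hA1 hA2
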